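/- Let p ≥ 1 be an integer and q a nonzero integer, and let G = ⟨a, b, t ∣ t a^p t⁻¹ = b⁻¹ a^p, t b^{-q} a⁻¹ t⁻¹ = b^{-q}⟩ be the group with this presentation (the Lin presentation of the genus one two-bridge knot group of C[2p, 2q]), where b^{-q} is interpreted as an integer power. Then, with commutator convention [x,y] = x⁻¹y⁻¹xy, the following hold: t^p a^p ∈ ⟨⟨t⟩⟩⁺, b^q t^p b^{-q} a^{-p} ∈ ⟨⟨t⟩⟩⁺, and t^{2p}[b^q, a^p] ∈ ⟨⟨t⟩⟩⁺. -/

import Mathlib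

/-- `⟨⟨g⟩⟩⁺`: the set of all non-empty finite products of conjugates of `g`. -/
def conjProdSet {G : Type*} [Group G] (g : G) : Set G :=
  {a | ∃ xs : List G, xs ≠ [] ∧ (xs.map (fun x => x * g * x⁻¹)).prod = a}

/-- The commutator, with the convention `[x,y] = x⁻¹y⁻¹xy`. -/
def com {G : Type*} [Group G] (x y : G) : G := x⁻¹ * y⁻¹ * x * y

/-- Relators of the Lin presentation
`⟨a, b, t ∣ t a^p t⁻¹ = b⁻¹ a^p, t b^{-q} a⁻¹ t⁻¹ = b^{-q}⟩`
of the genus one two-bridge knot group of `C[2p, 2q]`;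
generator `0` is `a`, generator `1` is `b`, generator `2` is `t`. -/
def linRels (p q : ℤ) : Set (FreeGroup (Fin 3)) :=
  { FreeGroup.of 2 * FreeGroup.of 0 ^ p * (FreeGroup.of 2)⁻¹ *
      ((FreeGroup.of 1)⁻¹ * FreeGroup.of 0 ^ p)⁻¹,
    FreeGroup.of 2 * FreeGroup.of 1 ^ (-q) * (FreeGroup.of 0)⁻¹ *
      (FreeGroup.of 2)⁻¹ * (FreeGroup.of 1 ^ (-q))⁻¹ }

/-!
By the second relator, `t a = b^q t b^{-q}` is a conjugate of `t`. Since `⟨⟨t⟩⟩⁺` is a semigroup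
closed under conjugation, it then contains `t^p a^p`, as
`t^{n+1} a^{n+1} = t^n (t a) t^{-n} · t^n a^n`, and `(t a)^p a^{-p} = b^q t^p b^{-q} a^{-p}`, as
`(t a)^{n+1} a^{-(n+1)} = (t a)^n a^{-n} · a^n t a^{-n}`. Finally
`t^{2p}[b^q, a^p] = t^p b^{-q} (b^q t^p b^{-q} a^{-p}) b^q t^{-p} · t^p a^p`.
-/

section conjProdSet

variable {G : Type*} [Group G] {t x y : G}

lemma mem_conjProdSet_self (t : G) : t ∈ conjProdSet t :=
  ⟨[1], by simp, by simp⟩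

lemma conj_mem_conjProdSet (g t : G) : g * t * g⁻¹ ∈ conjProdSet t :=
  ⟨[g], by simp, by simp⟩

lemma mul_mem_conjProdSet (hx : x ∈ conjProdSet t) (hy : y ∈ conjProdSet t) :
    x * y ∈ conjProdSet t := by
  obtain ⟨xs, hxs, rfl⟩ := hx
  obtain ⟨ys, -, rfl⟩ := hy
  exact ⟨xs ++ ys, by simp [hxs], by simp⟩

lemma conj_mem_conjProdSet_of_mem (g : G) (hx : x ∈ conjProdSet t) :
    g * x * g⁻¹ ∈ conjProdSet t := by
  obtain ⟨xs, hxs, rfl⟩ := hx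
  refine ⟨xs.map (g * ·), by simpa using hxs, ?_⟩
  clear hxs
  induction xs with
  | nil => simp
  | cons y ys ih =>
    simp only [List.map_cons, List.prod_cons] at ih ⊢
    rw [ih]
    group

lemma zpow_mul_zpow_mem_conjProdSet {a : G} (h : t * a ∈ conjProdSet t) {n : ℤ} (hn : 1 ≤ n) :
    t ^ n * a ^ n ∈ conjProdSet t := by
  induction n, hn using Int.leInduction with
  | base => simpa using h
  | succ n _ ih =>
    have := mul_mem_conjProdSet (conj_mem_conjProdSet_of_mem (t ^ n) h) ih
    convert this using 1
    group

lemma mul_zpow_mul_zpow_neg_mem_conjProdSet (t a : G) {n : ℤ} (hn : 1 ≤ n) :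
    (t * a) ^ n * a ^ (-n) ∈ conjProdSet t := by
  induction n, hn using Int.leInduction with
  | base => simpa using mem_conjProdSet_self t
  | succ n _ ih =>
    have := mul_mem_conjProdSet ih (conj_mem_conjProdSet (a ^ n) t)
    convert this using 1
    rw [zpow_add_one]
    group

end conjProdSet

lemma conjProdSet_memberships_of_mul_eq_conj {G : Type*} [Group G] {t a b : G} {p q : ℤ}
    (hp : 1 ≤ p) (hta : t * a = b ^ q * t * (b ^ q)⁻¹) :
    t ^ p * a ^ p ∈ conjProdSet t ∧
    b ^ q * t ^ p * b ^ (-q) * a ^ (-p) ∈ conjProdSet t ∧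
    t ^ (2 * p) * com (b ^ q) (a ^ p) ∈ conjProdSet t := by
  have h₁ : t ^ p * a ^ p ∈ conjProdSet t :=
    zpow_mul_zpow_mem_conjProdSet (hta ▸ conj_mem_conjProdSet _ _) hp
  have h₂ : b ^ q * t ^ p * b ^ (-q) * a ^ (-p) ∈ conjProdSet t := by
    rw [zpow_neg b, ← conj_zpow, ← hta]
    exact mul_zpow_mul_zpow_neg_mem_conjProdSet t a hp
  refine ⟨h₁, h₂, ?_⟩
  have h₃ := mul_mem_conjProdSet
    (conj_mem_conjProdSet_of_mem (t ^ p) (conj_mem_conjProdSet_of_mem (b ^ (-q)) h₂)) h₁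
  convert h₃ using 1
  simp only [com]
  group

lemma linRels_of_mul_of (p q : ℤ) :
    (PresentedGroup.of 2 * PresentedGroup.of 0 : PresentedGroup (linRels p q)) =
      PresentedGroup.of 1 ^ q * PresentedGroup.of 2 * (PresentedGroup.of 1 ^ q)⁻¹ := by
  set a : PresentedGroup (linRels p q) := PresentedGroup.of 0
  set b : PresentedGroup (linRels p q) := PresentedGroup.of 1
  set t : PresentedGroup (linRels p q) := PresentedGroup.of 2
  have h : t * b ^ (-q) * a⁻¹ * t⁻¹ = b ^ (-q) := by
    have := PresentedGroup.mk_eq_mk_of_mul_inv_mem (rels := linRels p q) (Or.inr rfl)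
    rwa [map_mul, map_mul, map_mul, map_inv, map_inv, map_zpow] at this
  calc t * a = (t * b ^ (-q) * a⁻¹ * t⁻¹)⁻¹ * t * b ^ (-q) := by group
    _ = b ^ q * t * (b ^ q)⁻¹ := by rw [h, zpow_neg, inv_inv]

theorem linPresentation_mem_conjProdSet_general (p q : ℤ) (hp : 1 ≤ p) :
    letI G := PresentedGroup (linRels p q)
    letI a : G := PresentedGroup.of 0
    letI b : G := PresentedGroup.of 1
    letI t : G := PresentedGroup.of 2
    t ^ p * a ^ p ∈ conjProdSet t ∧
    b ^ q * t ^ p * b ^ (-q) * a ^ (-p) ∈ conjProdSet t ∧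
    t ^ (2 * p) * com (b ^ q) (a ^ p) ∈ conjProdSet t :=
  conjProdSet_memberships_of_mul_eq_conj hp (linRels_of_mul_of p q)

/-- In the Lin presentation of the genus one two-bridge knot group of
`C[2p, 2q]` (`p ≥ 1`, `q ≠ 0`), one has `t^p a^p ∈ ⟨⟨t⟩⟩⁺`,
`b^q t^p b^{-q} a^{-p} ∈ ⟨⟨t⟩⟩⁺` and `t^{2p}[b^q, a^p] ∈ ⟨⟨t⟩⟩⁺`. -/
theorem linPresentation_mem_conjProdSet (p q : ℤ) (hp : 1 ≤ p) (hq : q ≠ 0) :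
    letI G := PresentedGroup (linRels p q)
    letI a : G := PresentedGroup.of 0
    letI b : G := PresentedGroup.of 1
    letI t : G := PresentedGroup.of 2
    t ^ p * a ^ p ∈ conjProdSet t ∧
    b ^ q * t ^ p * b ^ (-q) * a ^ (-p) ∈ conjProdSet t ∧
    t ^ (2 * p) * com (b ^ q) (a ^ p) ∈ conjProdSet t :=
  linPresentation_mem_conjProdSet_general p q hp
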